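/- arXiv:1402.0811 — 8 statements merged into one kernel-verified Lean document; each statement's English description precedes it below -/
import Mathlib

section
/- If n is i-tuply y-densely divisible and m divides n, then m is i-tuply y·(n/m)-densely divisible. -/
set_option maxHeartbeats 1000000

/-- `DD y i n` : `n` is `i`-tuply `y`-densely divisible (Definition 2.1 of Polymath8a). -/
def DD (y : ℝ) : ℕ → ℕ → Prop
  | 0, _ => True
  | (i + 1), n => ∀ j k : ℕ, j + k = i → ∀ R : ℝ, 1 ≤ R → R ≤ y * n →
      ∃ q r : ℕ, n = q * r ∧ y⁻¹ * R ≤ (r : ℝ) ∧ (r : ℝ) ≤ R ∧ DD y j q ∧ DD y k r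
termination_by i n => i
decreasing_by all_goals omega

lemma DD_mono {y y' : ℝ} (hy : 1 ≤ y) (hyy' : y ≤ y') :
    ∀ i n, 0 < n → DD y i n → DD y' i n := by
  intro i
  induction i using Nat.strong_induction_on with
  | _ i ih =>
    match i with
    | 0 => intro n _ _; rw [DD]; trivial
    | i + 1 =>
      intro n hn h
      rw [DD] at h ⊢
      intro j k hjk R hR hRy'
      have hy0 : (0:ℝ) < y := lt_of_lt_of_le one_pos hy
      have hy'0 : (0:ℝ) < y' := lt_of_lt_of_le hy0 hyy'
      have hn1 : (1:ℝ) ≤ (n:ℝ) := by exact_mod_cast hn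
      have h1 : 1 ≤ min R (y * n) := le_min hR (by nlinarith)
      obtain ⟨q, r, hqr, hr1, hr2, hq, hr⟩ := h j k hjk (min R (y * n)) h1 (min_le_right _ _)
      have hqr0 : 0 < q * r := hqr ▸ hn
      have hq0 : 0 < q := Nat.pos_of_ne_zero (by rintro rfl; simp at hqr0)
      have hr0 : 0 < r := Nat.pos_of_ne_zero (by rintro rfl; simp at hqr0)
      refine ⟨q, r, hqr, ?_, le_trans hr2 (min_le_left _ _),
        ih j (by omega) q hq0 hq, ih k (by omega) r hr0 hr⟩
      rcases le_or_gt R (y * n) with hc | hc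
      · rw [min_eq_left hc] at hr1
        have : y'⁻¹ ≤ y⁻¹ := inv_anti₀ hy0 hyy'
        nlinarith [inv_pos.mpr hy'0, inv_pos.mpr hy0]
      · rw [min_eq_right hc.le] at hr1
        rw [inv_mul_eq_div, div_le_iff₀ hy0] at hr1
        rw [inv_mul_eq_div, div_le_iff₀ hy'0]
        nlinarith

/-- If `n` is `i`-tuply `y`-densely divisible and `m ∣ n`, then `m` is `i`-tuply
`y * (n/m)`-densely divisible. -/
theorem densely_divisible_of_dvd (y : ℝ) (hy : 1 ≤ y) (i : ℕ) (n m : ℕ)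
    (hn : 0 < n) (hmn : m ∣ n) (h : DD y i n) :
    DD (y * ((n : ℝ) / (m : ℝ))) i m := by
  induction i using Nat.strong_induction_on generalizing n m with
  | _ i ih =>
    match i with
    | 0 => rw [DD]; trivial
    | i + 1 =>
      rw [DD] at h ⊢
      intro j k hjk R hR hRle
      have hm : 0 < m := Nat.pos_of_dvd_of_pos hmn hn
      have hy0 : (0:ℝ) < y := lt_of_lt_of_le one_pos hy
      have hmR : (0:ℝ) < (m:ℝ) := by exact_mod_cast hm
      have hnR : (0:ℝ) < (n:ℝ) := by exact_mod_cast hn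
      have key : y * ((n : ℝ) / (m : ℝ)) * m = y * n := by field_simp
      rw [key] at hRle
      obtain ⟨q, r, hqr, hr1, hr2, hq, hr⟩ := h j k hjk R hR hRle
      have hqr0 : 0 < q * r := hqr ▸ hn
      have hq0 : 0 < q := Nat.pos_of_ne_zero (by rintro rfl; simp at hqr0)
      have hr0 : 0 < r := Nat.pos_of_ne_zero (by rintro rfl; simp at hqr0)
      have hg0 : 0 < Nat.gcd r m := Nat.gcd_pos_of_pos_right r hm
      have hco0 : Nat.Coprime (m / Nat.gcd r m) (r / Nat.gcd r m) :=
        (Nat.coprime_div_gcd_div_gcd hg0).symm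
      have hgl : Nat.gcd r m * Nat.lcm r m = r * m := Nat.gcd_mul_lcm r m
      set g := Nat.gcd r m with hgdef
      obtain ⟨b, hrb⟩ : g ∣ r := Nat.gcd_dvd_left r m
      obtain ⟨q', hmq'⟩ : g ∣ m := Nat.gcd_dvd_right r m
      have hq'0 : 0 < q' := Nat.pos_of_ne_zero (by rintro rfl; rw [mul_zero] at hmq'; omega)
      have hb0 : 0 < b := Nat.pos_of_ne_zero (by rintro rfl; rw [mul_zero] at hrb; omega)
      have hco : Nat.Coprime q' b := by
        have e1 : m / g = q' := by rw [hmq', Nat.mul_div_cancel_left _ hg0]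
        have e2 : r / g = b := by rw [hrb, Nat.mul_div_cancel_left _ hg0]
        rwa [e1, e2] at hco0
      -- q' divides q
      have hmqr : m ∣ q * r := hqr ▸ hmn
      have hq'q : q' ∣ q := by
        have hdvd1 : q' * g ∣ q * b * g := by
          have e : q * b * g = q * r := by rw [hrb]; ring
          rw [e, mul_comm q' g, ← hmq']; exact hmqr
        exact hco.dvd_of_dvd_mul_right ((Nat.mul_dvd_mul_iff_right hg0).mp hdvd1)
      obtain ⟨a, hqa⟩ := hq'q
      have ha0 : 0 < a := Nat.pos_of_ne_zero (by rintro rfl; rw [mul_zero] at hqa; omega)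
      have hgr : g ∣ r := Dvd.intro b hrb.symm
      have hnm : n = m * (a * b) := by rw [hqr, hqa, hrb, hmq']; ring
      have hnmR : (n : ℝ) / (m : ℝ) = (a : ℝ) * b := by
        rw [div_eq_iff (ne_of_gt hmR)]; push_cast [hnm]; ring
      have ha1 : (1:ℝ) ≤ (a:ℝ) := by exact_mod_cast ha0
      have hb1 : (1:ℝ) ≤ (b:ℝ) := by exact_mod_cast hb0
      have hDq : DD (y * ((n : ℝ) / (m : ℝ))) j q' := by
        have hqq' : (q:ℝ)/(q':ℝ) = (a:ℝ) := by
          rw [div_eq_iff (by exact_mod_cast hq'0.ne' : ((q':ℕ):ℝ) ≠ 0)]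
          push_cast [hqa]; ring
        apply DD_mono (y := y * ((q:ℝ)/(q':ℝ)))
        · rw [hqq']; nlinarith
        · rw [hqq', hnmR]
          nlinarith [mul_nonneg (mul_nonneg hy0.le (by linarith : (0:ℝ) ≤ (a:ℝ))) (by linarith : (0:ℝ) ≤ (b:ℝ) - 1)]
        · exact hq'0
        · exact ih j (by omega) q q' hq0 ⟨a, hqa⟩ hq
      have hDr : DD (y * ((n : ℝ) / (m : ℝ))) k (g) := by
        have hrg : (r:ℝ)/((g : ℕ):ℝ) = (b:ℝ) := by
          rw [div_eq_iff (by exact_mod_cast hg0.ne' : ((g : ℕ):ℝ) ≠ 0)]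
          push_cast [hrb]; ring
        apply DD_mono (y := y * ((r:ℝ)/((g : ℕ):ℝ)))
        · rw [hrg]; nlinarith
        · rw [hrg, hnmR]
          nlinarith [mul_nonneg (mul_nonneg hy0.le (by linarith : (0:ℝ) ≤ (b:ℝ))) (by linarith : (0:ℝ) ≤ (a:ℝ) - 1)]
        · exact hg0
        · exact ih k (by omega) r (g) hr0 hgr hr
      refine ⟨q', g, by rw [hmq']; ring, ?_, ?_, hDq, hDr⟩
      · -- lower bound
        have hlcm : Nat.lcm r m ∣ n := Nat.lcm_dvd ⟨q, by rw [hqr]; ring⟩ hmn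
        have hlcmle : Nat.lcm r m ≤ n := Nat.le_of_dvd hn hlcm
        have hgl : g * Nat.lcm r m = r * m := Nat.gcd_mul_lcm r m
        have hrm : (r:ℝ) * m ≤ ((g : ℕ):ℝ) * n := by
          have : r * m ≤ g * n := by
            calc r * m = g * Nat.lcm r m := hgl.symm
            _ ≤ g * n := Nat.mul_le_mul_left _ hlcmle
          exact_mod_cast this
        have hRyr : R ≤ y * r := by
          rw [inv_mul_eq_div, div_le_iff₀ hy0] at hr1; linarith
        rw [hnmR, inv_mul_eq_div, div_le_iff₀ (mul_pos hy0 (mul_pos (by linarith : (0:ℝ) < (a:ℝ)) (by linarith : (0:ℝ) < (b:ℝ))))]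
        push_cast [hnm] at hrm
        nlinarith [hrm, hRyr, mul_pos hy0 hmR]
      · calc ((g : ℕ):ℝ) ≤ (r:ℝ) := by exact_mod_cast Nat.le_of_dvd hr0 hgr
          _ ≤ R := hr2
end

section
/- If n is i-tuply y-densely divisible and n divides l, then l is i-tuply y·(l/n)-densely divisible. -/
lemma DD_one (y : ℝ) (hy : 1 ≤ y) : ∀ i, DD y i 1 := by
  intro i
  induction i using Nat.strong_induction_on with
  | _ i IH =>
    rcases i with _ | i
    · rw [DD]; trivial
    · rw [DD]
      intro j k hjk R hR1 hR2
      have hy0 : (0:ℝ) < y := by linarith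
      refine ⟨1, 1, by norm_num, ?_, ?_, IH j (by omega), IH k (by omega)⟩
      · push_cast
        rw [inv_mul_le_iff₀ hy0]
        simpa using hR2
      · exact_mod_cast hR1

lemma DD_mono_y (y y' : ℝ) (hy : 1 ≤ y) (hyy : y ≤ y') :
    ∀ i n, DD y i n → DD y' i n := by
  intro i
  induction i using Nat.strong_induction_on with
  | _ i IH =>
    rcases i with _ | i
    · intro n _; rw [DD]; trivial
    · intro n h
      rw [DD] at h ⊢
      intro j k hjk R hR1 hR2
      have hy0 : (0:ℝ) < y := by linarith
      have hy'0 : (0:ℝ) < y' := by linarith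
      have hn1 : (1:ℝ) ≤ (n:ℝ) := by
        rcases Nat.eq_zero_or_pos n with h0 | h0
        · exfalso; rw [h0] at hR2; push_cast at hR2; nlinarith
        · exact_mod_cast h0
      set R' := min R (y * n) with hR'
      have hR'1 : 1 ≤ R' := le_min hR1 (by nlinarith)
      have hR'2 : R' ≤ y * n := min_le_right _ _
      obtain ⟨q, r, hqr, h1, h2, hq, hr⟩ := h j k hjk R' hR'1 hR'2
      refine ⟨q, r, hqr, ?_, le_trans h2 (min_le_left _ _),
        IH j (by omega) q hq, IH k (by omega) r hr⟩
      rcases le_or_gt R (y * n) with hcase | hcase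
      · have hRR : R' = R := min_eq_left hcase
        rw [hRR] at h1
        have hinv : y'⁻¹ ≤ y⁻¹ := by
          apply inv_anti₀ hy0 hyy
        have : y'⁻¹ * R ≤ y⁻¹ * R := by
          apply mul_le_mul_of_nonneg_right hinv (by linarith)
        linarith
      · have hRR : R' = y * n := min_eq_right (le_of_lt hcase)
        rw [hRR] at h1
        have hyn : y⁻¹ * (y * n) = (n:ℝ) := by field_simp
        have hn_le : (n:ℝ) ≤ r := by linarith [hyn ▸ h1]
        have : y'⁻¹ * R ≤ (n:ℝ) := by
          rw [inv_mul_le_iff₀ hy'0]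
          linarith
        linarith

lemma DD_mono_i (y : ℝ) : ∀ i n, DD y (i + 1) n → DD y i n := by
  intro i
  induction i using Nat.strong_induction_on with
  | _ i IH =>
    rcases i with _ | i
    · intro n _; rw [DD]; trivial
    · intro n h
      rw [DD] at h ⊢
      intro j k hjk R hR1 hR2
      obtain ⟨q, r, hqr, h1, h2, hq, hr⟩ := h (j + 1) k (by omega) R hR1 hR2
      exact ⟨q, r, hqr, h1, h2, IH j (by omega) q hq, hr⟩

lemma DD_mono_le (y : ℝ) (i i' : ℕ) (hii : i ≤ i') : ∀ n, DD y i' n → DD y i n := by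
  induction i' with
  | zero => intro n h; obtain rfl : i = 0 := Nat.le_zero.mp hii; exact h
  | succ i' IH =>
    intro n h
    rcases Nat.lt_or_ge i (i' + 1) with hlt | hge
    · exact IH (by omega) n (DD_mono_i y i' n h)
    · have h0 : i = i' + 1 := by omega
      subst h0; exact h

/-- If `n` is `i`-tuply `y`-densely divisible and `n ∣ l`, then `l` is `i`-tuply
`y * (l/n)`-densely divisible. -/
theorem densely_divisible_of_multiple (y : ℝ) (hy : 1 ≤ y) (i : ℕ) (n l : ℕ)
    (hn : 0 < n) (hl : 0 < l) (hnl : n ∣ l) (h : DD y i n) :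
    DD (y * ((l : ℝ) / (n : ℝ))) i l := by
  induction i using Nat.strong_induction_on generalizing n l with
  | _ i IH =>
    rcases i with _ | i
    · rw [DD]; trivial
    · obtain ⟨m, hm⟩ := hnl
      have hm0 : 0 < m := by
        rcases Nat.eq_zero_or_pos m with h0 | h0
        · subst h0; simp at hm; omega
        · exact h0
      have hn0 : (0:ℝ) < n := by exact_mod_cast hn
      have hm1 : (1:ℝ) ≤ (m:ℝ) := by exact_mod_cast hm0
      have hn1 : (1:ℝ) ≤ (n:ℝ) := by exact_mod_cast hn
      have hy0 : (0:ℝ) < y := by linarith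
      have hdiv : (l:ℝ) / (n:ℝ) = (m:ℝ) := by
        rw [hm]; push_cast; field_simp
      rw [hdiv, DD]
      intro j k hjk R hR1 hR2
      have hym1 : 1 ≤ y * m := by nlinarith
      have hym0 : (0:ℝ) < y * m := by linarith
      have hlcast : (l:ℝ) = (n:ℝ) * m := by rw [hm]; push_cast; ring
      rcases le_or_gt R (y * n * m) with hc | hc
      · rcases le_or_gt (m:ℝ) R with hc2 | hc2
        · -- use R' = R / m on n
          have hR'1 : 1 ≤ R / m := (one_le_div (by linarith)).mpr hc2
          have hR'2 : R / m ≤ y * n := by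
            rw [div_le_iff₀ (by linarith)]; nlinarith
          rw [DD] at h
          obtain ⟨q, r, hqr, h1, h2, hq, hr⟩ := h j k hjk (R/m) hR'1 hR'2
          have hq0 : 0 < q := by
            rcases Nat.eq_zero_or_pos q with h0 | h0
            · subst h0; simp at hqr; omega
            · exact h0
          refine ⟨q * m, r, by rw [hm, hqr]; ring, ?_, ?_, ?_, ?_⟩
          · have hEq : (y * m)⁻¹ * R = y⁻¹ * (R / m) := by
              rw [mul_inv, div_eq_mul_inv]; ring
            rw [hEq]; exact h1
          · have : R / m ≤ R := by
              rw [div_le_iff₀ (by linarith)]; nlinarith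
            linarith
          · have hIH := IH j (by omega) q (q * m) hq0 (by positivity) ⟨m, rfl⟩ hq
            have heq : ((q * m : ℕ):ℝ) / (q:ℝ) = (m:ℝ) := by
              push_cast
              field_simp
            rwa [heq] at hIH
          · exact DD_mono_y y (y * m) hy (by nlinarith) k r hr
        · -- R < m : take q = l, r = 1
          refine ⟨l, 1, by ring, ?_, by exact_mod_cast hR1, ?_, DD_one _ hym1 k⟩
          · push_cast
            rw [inv_mul_le_iff₀ hym0]
            nlinarith
          · have hj : DD y j n := DD_mono_le y j (i + 1) (by omega) n h
            have hIH := IH j (by omega) n l hn hl ⟨m, hm⟩ hj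
            rwa [hdiv] at hIH
      · -- R > y*n*m : take q = 1, r = l
        refine ⟨1, l, by ring, ?_, ?_, DD_one _ hym1 j, ?_⟩
        · rw [inv_mul_le_iff₀ hym0]
          linarith
        · rw [hlcast]; nlinarith
        · have hk : DD y k n := DD_mono_le y k (i + 1) (by omega) n h
          have hIH := IH k (by omega) n l hn hl ⟨m, hm⟩ hk
          rwa [hdiv] at hIH
end

section
/- If m and n are both y-densely divisible (i.e., 1-tuply y-densely divisible), then their least common multiple [m,n] is y-densely divisible. -/
/-- If `m` and `n` are both `y`-densely divisible (i.e. `1`-tuply `y`-densely divisible),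
then their least common multiple is `y`-densely divisible. -/
theorem densely_divisible_lcm (y : ℝ) (hy : 1 ≤ y) (m n : ℕ) (hm : 0 < m) (hn : 0 < n)
    (h₁ : DD y 1 m) (h₂ : DD y 1 n) : DD y 1 (Nat.lcm m n) := by
  rw [DD] at h₁ h₂ ⊢
  intro j k hjk R hR1 hR2
  obtain ⟨rfl, rfl⟩ : j = 0 ∧ k = 0 := by omega
  have hLpos : 0 < Nat.lcm m n := Nat.pos_of_ne_zero (Nat.lcm_ne_zero hm.ne' hn.ne')
  by_cases h1 : R ≤ y * m
  · obtain ⟨q, r, hqr, hr1, hr2, -, -⟩ := h₁ 0 0 rfl R hR1 h1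
    obtain ⟨a, ha⟩ := Nat.dvd_lcm_left m n
    exact ⟨q * a, r, by rw [ha, hqr]; ring, hr1, hr2, (by rw [DD]; trivial), (by rw [DD]; trivial)⟩
  by_cases h2 : R ≤ y * n
  · obtain ⟨q, r, hqr, hr1, hr2, -, -⟩ := h₂ 0 0 rfl R hR1 h2
    obtain ⟨a, ha⟩ := Nat.dvd_lcm_right m n
    exact ⟨q * a, r, by rw [ha, hqr]; ring, hr1, hr2, (by rw [DD]; trivial), (by rw [DD]; trivial)⟩
  · push_neg at h1 h2
    obtain ⟨a, ha⟩ := Nat.dvd_lcm_left m n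
    have hapos : 0 < a := by
      rcases Nat.eq_zero_or_pos a with h | h
      · simp [h] at ha; omega
      · exact h
    have haR : (a : ℝ) ≤ R := by
      have han : a ∣ n := by
        have : m * a ∣ m * n := ha ▸ Nat.lcm_dvd_mul m n
        exact (mul_dvd_mul_iff_left hm.ne').mp this
      have : (a : ℝ) ≤ (n : ℝ) := Nat.cast_le.mpr (Nat.le_of_dvd hn han)
      have hny : (n : ℝ) ≤ y * n := le_mul_of_one_le_left (Nat.cast_nonneg n) hy
      linarith
    have hapos' : (0 : ℝ) < a := Nat.cast_pos.mpr hapos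
    have hR1' : 1 ≤ R / a := (one_le_div hapos').mpr haR
    have hR2' : R / a ≤ y * m := by
      rw [div_le_iff₀ hapos']
      calc R ≤ y * (Nat.lcm m n) := hR2
        _ = y * m * a := by rw [ha]; push_cast; ring
    obtain ⟨q, r, hqr, hr1, hr2, -, -⟩ := h₁ 0 0 rfl (R / a) hR1' hR2'
    refine ⟨q, r * a, by rw [ha, hqr]; ring, ?_, ?_, (by rw [DD]; trivial), (by rw [DD]; trivial)⟩
    · push_cast
      calc y⁻¹ * R = (y⁻¹ * (R / a)) * a := by field_simp
        _ ≤ r * a := by nlinarith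
    · push_cast
      calc (r : ℝ) * a ≤ (R / a) * a := by nlinarith
        _ = R := by field_simp
end

section
/- Any y-smooth natural number (all prime factors ≤ y) is i-tuply y-densely divisible for every i ≥ 0. -/
/-- Any `y`-smooth natural number (all prime factors at most `y`) is `i`-tuply
`y`-densely divisible for every `i ≥ 0`. -/
theorem smooth_densely_divisible (y : ℝ) (hy : 1 ≤ y) (n : ℕ) (hn : 0 < n)
    (hsmooth : ∀ p : ℕ, p.Prime → p ∣ n → (p : ℝ) ≤ y) (i : ℕ) : DD y i n := by
  classical
  have hy0 : (0 : ℝ) < y := lt_of_lt_of_le one_pos hy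
  induction i using Nat.strong_induction_on generalizing n with
  | _ i IH =>
    match i with
    | 0 => rw [DD]; trivial
    | i + 1 =>
      rw [DD]
      intro j k hjk R hR1 hR2
      set S : Finset ℕ := n.divisors.filter (fun d => (d : ℝ) ≤ R) with hS
      have hne : S.Nonempty := ⟨1, by
        simp [hS, Nat.one_mem_divisors, hn.ne', hR1]⟩
      set r := S.max' hne with hr
      have hrS : r ∈ S := S.max'_mem hne
      have hrS1 : r ∈ n.divisors := (Finset.mem_filter.mp hrS).1
      have hrdiv : r ∣ n := (Nat.mem_divisors.mp hrS1).1
      have hrR : (r : ℝ) ≤ R := (Finset.mem_filter.mp hrS).2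
      have hrpos : 0 < r := Nat.pos_of_dvd_of_pos hrdiv hn
      have hqdiv : n / r ∣ n := Nat.div_dvd_of_dvd hrdiv
      have hqpos : 0 < n / r := Nat.div_pos (Nat.le_of_dvd hn hrdiv) hrpos
      have hRr : R ≤ y * r := by
        by_cases hrn : r = n
        · rw [hrn]; exact hR2
        · -- r < n, so n / r ≥ 2, take its least prime factor p
          have hm1 : n / r ≠ 1 := by
            intro h
            have := Nat.div_mul_cancel hrdiv
            rw [h, one_mul] at this
            exact hrn this
          set p := (n / r).minFac with hp
          have hpp : p.Prime := Nat.minFac_prime hm1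
          have hpdvd : p ∣ n / r := Nat.minFac_dvd _
          have hrpdvd : r * p ∣ n := by
            rcases hpdvd with ⟨c, hc⟩
            exact ⟨c, by rw [← Nat.div_mul_cancel hrdiv, hc]; ring⟩
          have hrpnot : r * p ∉ S := by
            intro hmem
            have := S.le_max' _ hmem
            have h2 : 2 ≤ p := hpp.two_le
            nlinarith [hrpos]
          have hRlt : R < (r * p : ℕ) := by
            by_contra h
            exact hrpnot (Finset.mem_filter.mpr ⟨Nat.mem_divisors.mpr ⟨hrpdvd, hn.ne'⟩, le_of_not_gt h⟩)
          have hpy : (p : ℝ) ≤ y := hsmooth p hpp (hpdvd.trans hqdiv)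
          push_cast at hRlt
          have hr0 : (0 : ℝ) < (r : ℝ) := Nat.cast_pos.mpr hrpos
          nlinarith
      refine ⟨n / r, r, (Nat.div_mul_cancel hrdiv).symm, ?_, hrR, ?_, ?_⟩
      · rw [inv_mul_le_iff₀ hy0]; exact hRr
      · exact IH j (by omega) (n / r) hqpos
          (fun p hp hpd => hsmooth p hp (hpd.trans hqdiv))
      · exact IH k (by omega) r hrpos
          (fun p hp hpd => hsmooth p hp (hpd.trans hrdiv))
end

section
/- Let n be squarefree and z-smooth for some z ≥ y ≥ 1, and suppose the product of the primes p | n with p ≤ y is at least zⁱ/y. Then n is i-tuply y-densely divisible. -/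
/-!
If `a` has a divisor in every window `[R/y, R]` with `1 ≤ R ≤ y a`, so does `a p` for a prime
`p ≤ y a`: for `R > y a` multiply by `p` a divisor of `a` in the window of `R / p`. Hence
`y`-smooth numbers have such divisors and are densely divisible to every order. The theorem is
proved by induction on `i` for every `z`-smooth `n` with a `y`-smooth divisor `a`, `zⁱ ≤ y a`:
for `j + k + 1 = i` write `a = u v s` with `zʲ ≤ y u`, `zᵏ ≤ y v`, `z ≤ y s` and `n = a t`.
Depending on the size of `R`, the divisor `r` is taken inside `v s`, or as `v` times a divisor
of `s t`, or as `v s t` times a divisor of `u`; then each of `q = n / r` and `r` is either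
`y`-smooth or a multiple of `u`, resp. `v`, which is what the induction needs.
-/

def IsSmooth (y : ℝ) (m : ℕ) : Prop :=
  ∀ p : ℕ, p.Prime → p ∣ m → (p : ℝ) ≤ y

def HasDenseDivisors (y : ℝ) (m : ℕ) : Prop :=
  ∀ R : ℝ, 1 ≤ R → R ≤ y * m → ∃ r : ℕ, r ∣ m ∧ y⁻¹ * R ≤ (r : ℝ) ∧ (r : ℝ) ≤ R

section

variable {y z : ℝ}

theorem IsSmooth.of_dvd {m d : ℕ} (hm : IsSmooth y m) (hd : d ∣ m) : IsSmooth y d :=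
  fun p hp hpd => hm p hp (hpd.trans hd)

theorem IsSmooth.mul {a b : ℕ} (ha : IsSmooth y a) (hb : IsSmooth y b) : IsSmooth y (a * b) :=
  fun p hp hpd => (hp.dvd_mul.mp hpd).elim (ha p hp) (hb p hp)

theorem isSmooth_one : IsSmooth y 1 :=
  fun _ hp hpd => absurd (Nat.dvd_one.mp hpd) hp.ne_one

theorem Nat.Prime.isSmooth {p : ℕ} (hp : p.Prime) (hpy : (p : ℝ) ≤ y) : IsSmooth y p :=
  fun _ hq hqp => by rwa [(Nat.prime_dvd_prime_iff_eq hq hp).mp hqp]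

theorem hasDenseDivisors_zero : HasDenseDivisors y 0 :=
  fun R hR1 hR => by simp only [Nat.cast_zero, mul_zero] at hR; linarith

theorem hasDenseDivisors_one (hy : 1 ≤ y) : HasDenseDivisors y 1 := fun R hR1 hR =>
  ⟨1, one_dvd 1, by rw [Nat.cast_one, inv_mul_le_iff₀ (by linarith)]; simpa using hR,
    by simpa using hR1⟩

theorem HasDenseDivisors.exists_mul_mem_window {m v : ℕ} (hm : HasDenseDivisors y m)
    (hv : 0 < v) {R : ℝ} (hvR : v ≤ R) (hR : R ≤ y * (v * m)) :
    ∃ w : ℕ, w ∣ m ∧ y⁻¹ * R ≤ ((v * w : ℕ) : ℝ) ∧ ((v * w : ℕ) : ℝ) ≤ R := by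
  have hv' : (0 : ℝ) < v := Nat.cast_pos.mpr hv
  obtain ⟨w, hw, hw1, hw2⟩ := hm (R / v) (by rwa [le_div_iff₀ hv', one_mul])
    (by rw [div_le_iff₀ hv']; linarith)
  refine ⟨w, hw, ?_, ?_⟩
  · rw [← mul_div_assoc, div_le_iff₀ hv'] at hw1
    push_cast; linarith
  · rw [le_div_iff₀ hv'] at hw2
    push_cast; linarith

theorem HasDenseDivisors.exists_cofactor_mem_window {a b : ℕ} (ha : HasDenseDivisors y a)
    (hy : 0 < y) {R : ℝ} (hbR : b ≤ R) (hR0 : 0 < R) (hR : R ≤ y * (a * b)) :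
    ∃ q r : ℕ, a * b = q * r ∧ q ∣ a ∧ b ∣ r ∧ y⁻¹ * R ≤ r ∧ (r : ℝ) ≤ R := by
  obtain ⟨q, ⟨c, rfl⟩, hq1, hq2⟩ := ha (y * (a * b) / R)
    (by rwa [le_div_iff₀ hR0, one_mul])
    (by rw [div_le_iff₀ hR0, ← mul_assoc]; exact mul_le_mul_of_nonneg_left hbR (by positivity))
  have hq0 : (0 : ℝ) < q := by
    rcases Nat.eq_zero_or_pos q with rfl | hq
    · simp only [zero_mul, Nat.cast_zero, mul_zero] at hR; linarith
    · exact_mod_cast hq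
  refine ⟨q, c * b, by ring, dvd_mul_right q c, dvd_mul_left b c, ?_, ?_⟩
  · rw [le_div_iff₀ hR0] at hq2
    push_cast at hq2 ⊢
    rw [inv_mul_le_iff₀ hy]
    nlinarith
  · rw [← mul_div_assoc, inv_mul_cancel_left₀ hy.ne', div_le_iff₀ hR0] at hq1
    push_cast at hq1 ⊢
    nlinarith

theorem HasDenseDivisors.mul_of_le {a p : ℕ} (ha : HasDenseDivisors y a) (hp : 0 < p)
    (hpa : (p : ℝ) ≤ y * a) : HasDenseDivisors y (a * p) := by
  intro R hR1 hR
  by_cases hRa : R ≤ y * a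
  · obtain ⟨r, hr, hr'⟩ := ha R hR1 hRa
    exact ⟨r, hr.mul_right p, hr'⟩
  · obtain ⟨w, hw, hw'⟩ := ha.exists_mul_mem_window hp (by linarith)
      (by push_cast at hR; linarith)
    exact ⟨p * w, by rw [mul_comm a]; exact mul_dvd_mul_left p hw, hw'⟩

theorem HasDenseDivisors.mul {a b : ℕ} (ha : HasDenseDivisors y a) (hy : 0 ≤ y)
    (hb : IsSmooth (y * a) b) : HasDenseDivisors y (a * b) := by
  induction b using induction_on_primes with
  | zero => simpa using hasDenseDivisors_zero
  | one => simpa using ha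
  | prime_mul p b hp ih =>
    obtain rfl | hb0 := Nat.eq_zero_or_pos b
    · simpa using hasDenseDivisors_zero
    have hab : y * a ≤ y * ((a * b : ℕ) : ℝ) := by
      push_cast
      exact mul_le_mul_of_nonneg_left (le_mul_of_one_le_right (by positivity)
        (by exact_mod_cast hb0)) hy
    rw [show a * (p * b) = a * b * p by ring]
    exact (ih (hb.of_dvd (dvd_mul_left b p))).mul_of_le hp.pos
      ((hb p hp (dvd_mul_right p b)).trans hab)

theorem hasDenseDivisors_of_isSmooth {m : ℕ} (hy : 1 ≤ y) (hm : IsSmooth y m) :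
    HasDenseDivisors y m := by
  simpa using (hasDenseDivisors_one hy).mul (by linarith) (by simpa using hm)

theorem dd_of_isSmooth (hy : 1 ≤ y) : ∀ (i : ℕ) {m : ℕ}, IsSmooth y m → DD y i m
  | 0, _, _ => by rw [DD]; trivial
  | i + 1, m, hm => by
    rw [DD]
    intro j k hjk R hR1 hR
    obtain ⟨r, ⟨q, hq⟩, hr⟩ := hasDenseDivisors_of_isSmooth hy hm R hR1 hR
    exact ⟨q, r, by rw [hq, mul_comm], hr.1, hr.2,
      dd_of_isSmooth hy j (hm.of_dvd (Dvd.intro_left r hq.symm)),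
      dd_of_isSmooth hy k (hm.of_dvd (Dvd.intro q hq.symm))⟩
termination_by i => i

theorem IsSmooth.exists_mul_eq_of_pow_add_le (hy : 1 ≤ y) (hz : 1 ≤ z) {a : ℕ}
    (ha : IsSmooth y a) {j k : ℕ} (h : z ^ (j + k) ≤ y * a) :
    ∃ u b : ℕ, a = u * b ∧ z ^ j ≤ y * u ∧ z ^ k ≤ y * b := by
  obtain ⟨u, ⟨b, rfl⟩, hu1, hu2⟩ := hasDenseDivisors_of_isSmooth hy ha (z ^ j) (one_le_pow₀ hz)
    ((pow_le_pow_right₀ hz (Nat.le_add_right j k)).trans h)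
  refine ⟨u, b, rfl, by rwa [inv_mul_le_iff₀ (by linarith)] at hu1, ?_⟩
  have hzj : 0 < z ^ j := pow_pos (by linarith) j
  have hyb : 0 ≤ y * b := mul_nonneg (by linarith) (Nat.cast_nonneg b)
  refine le_of_mul_le_mul_left ?_ hzj
  calc z ^ j * z ^ k = z ^ (j + k) := (pow_add z j k).symm
    _ ≤ u * (y * b) := by push_cast at h; linarith
    _ ≤ z ^ j * (y * b) := mul_le_mul_of_nonneg_right hu2 hyb

theorem exists_window_split (hy : 1 ≤ y) {u v s t : ℕ} (hu : IsSmooth y u) (hv : IsSmooth y v)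
    (hs : IsSmooth y s) (hst : HasDenseDivisors y (s * t)) {R : ℝ} (hR1 : 1 ≤ R)
    (hR : R ≤ y * (u * v * s * t : ℕ)) :
    ∃ q r : ℕ, u * v * s * t = q * r ∧ y⁻¹ * R ≤ r ∧ (r : ℝ) ≤ R ∧
      (IsSmooth y q ∨ u ∣ q) ∧ (IsSmooth y r ∨ v ∣ r) := by
  by_cases hRvs : R ≤ y * (v * s : ℕ)
  · obtain ⟨r, ⟨c, hc⟩, hr⟩ := hasDenseDivisors_of_isSmooth hy (hv.mul hs) R hR1 hRvs
    refine ⟨u * c * t, r, ?_, hr.1, hr.2, .inr (Dvd.intro _ (mul_assoc u c t).symm),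
      .inl ((hv.mul hs).of_dvd (Dvd.intro c hc.symm))⟩
    rw [mul_assoc u v, hc]; ring
  by_cases hRvst : R ≤ y * (v * (s * t) : ℕ)
  · have hvs : 0 < v * s := Nat.pos_of_ne_zero fun h0 => by
      rw [← mul_assoc, h0, zero_mul, Nat.cast_zero, mul_zero] at hRvst; linarith
    have hvR : (v : ℝ) ≤ R := calc
      (v : ℝ) ≤ (v * s : ℕ) := by
        exact_mod_cast Nat.le_mul_of_pos_right v (Nat.pos_of_mul_pos_left hvs)
      _ ≤ y * (v * s : ℕ) := le_mul_of_one_le_left (Nat.cast_nonneg _) hy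
      _ ≤ R := (not_le.mp hRvs).le
    obtain ⟨w, ⟨c, hc⟩, hr⟩ := hst.exists_mul_mem_window (Nat.pos_of_mul_pos_right hvs) hvR
      (by push_cast at hRvst ⊢; linarith)
    refine ⟨u * c, v * w, ?_, hr.1, hr.2, .inr (dvd_mul_right u c), .inr (dvd_mul_right v w)⟩
    rw [mul_assoc (u * v), hc]; ring
  · have hvstR : ((v * s * t : ℕ) : ℝ) ≤ R := calc
      _ ≤ y * (v * s * t : ℕ) := le_mul_of_one_le_left (Nat.cast_nonneg _) hy
      _ ≤ R := by rw [mul_assoc v]; exact (not_le.mp hRvst).le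
    obtain ⟨q, r, hqr, hq, hr, hr'⟩ :=
      (hasDenseDivisors_of_isSmooth hy hu).exists_cofactor_mem_window (by linarith) hvstR
        (by linarith) (by rwa [← Nat.cast_mul, ← mul_assoc, ← mul_assoc])
    refine ⟨q, r, by rw [← hqr]; ring, hr'.1, hr'.2, .inl (hu.of_dvd hq),
      .inr ((dvd_mul_of_dvd_left (dvd_mul_right v s) t).trans hr)⟩

theorem dd_of_isSmooth_dvd (hy : 1 ≤ y) (hzy : y ≤ z) {i n a : ℕ} (hn : IsSmooth z n)
    (ha : IsSmooth y a) (han : a ∣ n) (hza : z ^ i ≤ y * a) : DD y i n := by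
  induction i using Nat.strong_induction_on generalizing n a with
  | _ i ih =>
  cases i with
  | zero => rw [DD]; trivial
  | succ i =>
  rw [DD]
  intro j k hjk R hR1 hR
  have hz : 1 ≤ z := hy.trans hzy
  obtain ⟨u, a₁, rfl, hu, ha₁⟩ := ha.exists_mul_eq_of_pow_add_le hy hz (j := j) (k := k + 1)
    (by rwa [← add_assoc, hjk])
  obtain ⟨v, s, rfl, hv, hs⟩ :=
    (ha.of_dvd (dvd_mul_left a₁ u)).exists_mul_eq_of_pow_add_le hy hz (j := k) (k := 1) ha₁
  obtain ⟨t, rfl⟩ := han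
  have hu' : IsSmooth y u := ha.of_dvd (dvd_mul_right u _)
  have hv' : IsSmooth y v := ha.of_dvd ((dvd_mul_right v s).mul_left u)
  have hs' : IsSmooth y s := ha.of_dvd ((dvd_mul_left s v).mul_left u)
  have hst : HasDenseDivisors y (s * t) := (hasDenseDivisors_of_isSmooth hy hs').mul (by linarith)
    fun p hp hpt => (hn p hp (dvd_mul_of_dvd_right hpt _)).trans (by simpa using hs)
  rw [← mul_assoc u v] at hn hR ⊢
  obtain ⟨q, r, hqr, hr1, hr2, hq, hr⟩ := exists_window_split hy hu' hv' hs' hst hR1 hR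
  rw [hqr] at hn ⊢
  refine ⟨q, r, rfl, hr1, hr2, ?_, ?_⟩
  · rcases hq with hq | hq
    · exact dd_of_isSmooth hy j hq
    · exact ih j (by omega) (hn.of_dvd (dvd_mul_right q r)) hu' hq hu
  · rcases hr with hr | hr
    · exact dd_of_isSmooth hy k hr
    · exact ih k (by omega) (hn.of_dvd (dvd_mul_left r q)) hv' hr hv

end

open scoped Classical in
theorem squarefree_smooth_densely_divisible_general (y z : ℝ) (hy : 1 ≤ y) (hzy : y ≤ z)
    (n : ℕ)
    (hsmooth : ∀ p : ℕ, p.Prime → p ∣ n → (p : ℝ) ≤ z) (i : ℕ)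
    (hprod : z ^ i / y ≤ ∏ p ∈ (n.primeFactors.filter (fun p => (p : ℝ) ≤ y) : Finset ℕ), (p : ℝ)) :
    DD y i n := by
  have hsmall : IsSmooth y (∏ p ∈ n.primeFactors.filter (fun p : ℕ => (p : ℝ) ≤ y), p) :=
    Finset.prod_induction _ _ (fun _ _ => IsSmooth.mul) isSmooth_one fun p hp =>
      (Nat.prime_of_mem_primeFactors (Finset.mem_filter.mp hp).1).isSmooth
        (Finset.mem_filter.mp hp).2
  refine dd_of_isSmooth_dvd hy hzy hsmooth hsmall
    ((Finset.prod_dvd_prod_of_subset _ _ _ (Finset.filter_subset _ _)).trans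
      (Nat.prod_primeFactors_dvd n)) ?_
  rwa [Nat.cast_prod, ← div_le_iff₀' (by linarith)]

open scoped Classical in
/-- If `n` is squarefree and `z`-smooth with `z ≥ y ≥ 1`, and the product of the primes
`p ∣ n` with `p ≤ y` is at least `zⁱ/y`, then `n` is `i`-tuply `y`-densely divisible. -/
theorem squarefree_smooth_densely_divisible (y z : ℝ) (hy : 1 ≤ y) (hzy : y ≤ z)
    (n : ℕ) (hn : Squarefree n)
    (hsmooth : ∀ p : ℕ, p.Prime → p ∣ n → (p : ℝ) ≤ z) (i : ℕ)
    (hprod : z ^ i / y ≤ ∏ p ∈ (n.primeFactors.filter (fun p => (p : ℝ) ≤ y) : Finset ℕ), (p : ℝ)) :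
    DD y i n :=
  squarefree_smooth_densely_divisible_general y z hy hzy n hsmooth i hprod
end

section
/- Let 1/10 < σ < 1/2 and let t₁,…,tₙ be non-negative reals summing to 1. Then at least one of the following holds: (Type 0) some tᵢ ≥ 1/2 + σ; (Type I/II) there is a partition {1,…,n} = S ∪ T with 1/2 − σ < Σ_{i∈S} tᵢ ≤ Σ_{i∈T} tᵢ < 1/2 + σ; (Type III) there exist distinct indices i,j,k with 2σ ≤ tᵢ ≤ tⱼ ≤ t_k ≤ 1/2 − σ and tᵢ+tⱼ ≥ 1/2+σ, tᵢ+t_k ≥ 1/2+σ, tⱼ+t_k ≥ 1/2+σ. -/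
/-!
If neither Type 0 nor Type I/II occurs, no subset sum lies in the gap `(1/2 - σ, 1/2 + σ)`.
A part smaller than `2σ`, the width of the gap, can never carry a subset sum across it, so the
small parts together weigh at most `1/2 - σ` and the large parts (`≥ 2σ`) carry the rest. Two
large parts weigh at least `4σ > 1/2 - σ`, hence at least `1/2 + σ`: four of them would weigh
more than `1`, while with at most two of them a single large part would reach `1/2 + σ`. So there
are exactly three large parts, and they form Type III.
-/

open Finset

theorem Finset.exists_embedding_monotone_comp {α β : Type*} [LinearOrder β] (f : α → β)
    {s : Finset α} {m : ℕ} (hs : #s = m) :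
    ∃ g : Fin m ↪ α, (∀ x, g x ∈ s) ∧ Monotone (f ∘ g) := by
  set e : Fin m → α := fun x => ((s.equivFinOfCardEq hs).symm x : α)
  have he : Function.Injective e := Subtype.val_injective.comp (Equiv.injective _)
  refine ⟨⟨e ∘ Tuple.sort (f ∘ e), he.comp (Equiv.injective _)⟩, fun x => coe_mem _, ?_⟩
  exact Tuple.monotone_sort (f ∘ e)

section Gap

variable {ι : Type*} {t : ι → ℝ} {a b c : ℝ}

def AvoidsGap (t : ι → ℝ) (a b : ℝ) : Prop :=
  ∀ S : Finset ι, ∑ i ∈ S, t i ≤ a ∨ b ≤ ∑ i ∈ S, t i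

theorem AvoidsGap.sum_le_of_lt (h : AvoidsGap t a b) {S : Finset ι}
    (hS : ∑ i ∈ S, t i < b) : ∑ i ∈ S, t i ≤ a :=
  (h S).resolve_right hS.not_ge

theorem AvoidsGap.sum_union_le [DecidableEq ι] (h : AvoidsGap t a b) {A B : Finset ι}
    (hA : ∀ i ∈ A, t i < b - a) (hB : ∑ i ∈ B, t i ≤ a) :
    ∑ i ∈ A ∪ B, t i ≤ a := by
  induction A using Finset.induction_on with
  | empty => simpa using hB
  | insert x A _ ih =>
    have hAB := ih fun i hi => hA i (mem_insert_of_mem hi)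
    rw [insert_union]
    by_cases hx : x ∈ A ∪ B
    · rwa [insert_eq_of_mem hx]
    · refine h.sum_le_of_lt ?_
      rw [sum_insert hx]
      linarith [hA x (mem_insert_self x A)]

variable [Fintype ι]

theorem avoidsGap_of_forall_not_balanced [DecidableEq ι] (hsum : ∑ i, t i = a + b)
    (h : ∀ S : Finset ι, a < ∑ i ∈ S, t i → ∑ i ∈ S, t i ≤ ∑ i ∈ Sᶜ, t i →
      b ≤ ∑ i ∈ Sᶜ, t i) :
    AvoidsGap t a b := by
  intro S
  by_contra! hS
  have hcompl := sum_add_sum_compl S t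
  rcases le_total (∑ i ∈ S, t i) (∑ i ∈ Sᶜ, t i) with hle | hle
  · linarith [h S hS.1 hle]
  · have := h Sᶜ (by linarith) (by rwa [compl_compl])
    rw [compl_compl] at this
    linarith

theorem card_le_three_of_le_add (ht : ∀ i, 0 ≤ t i) {L : Finset ι}
    (hpair : ∀ i ∈ L, ∀ j ∈ L, i ≠ j → c ≤ t i + t j) (hsum : ∑ i, t i < 2 * c) :
    #L ≤ 3 := by
  classical
  by_contra! hL
  obtain ⟨F, hFL, hF⟩ := exists_subset_card_eq (Nat.succ_le_of_lt hL)
  obtain ⟨i, P, hiP, rfl, hP⟩ := card_eq_succ.1 hF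
  obtain ⟨j, k, l, hjk, hjl, hkl, rfl⟩ := card_eq_three.1 hP
  have hmem : ∀ x ∈ ({i, j, k, l} : Finset ι), x ∈ L := fun x hx => hFL hx
  simp only [mem_insert, mem_singleton, not_or] at hiP hmem
  have hsub : ∑ x ∈ insert i {j, k, l}, t x ≤ ∑ x, t x :=
    sum_le_sum_of_subset_of_nonneg (subset_univ _) fun x _ _ => ht x
  rw [sum_insert (by simpa using hiP), sum_insert (by simp [hjk, hjl]),
    sum_pair hkl] at hsub
  linarith [hpair i (hmem i (by simp)) j (hmem j (by simp)) hiP.1,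
    hpair k (hmem k (by simp)) l (hmem l (by simp)) hkl]

theorem AvoidsGap.three_le_card [DecidableEq ι] (h : AvoidsGap t a b) (ht : ∀ i, 0 ≤ t i)
    (hb : 0 < b) (hsum : a + b ≤ ∑ i, t i) (hlt : ∀ i, t i < b) {L : Finset ι}
    (hsmall : ∀ i ∉ L, t i < b - a) : 3 ≤ #L := by
  by_contra! hL
  have hsmall' : ∀ i ∈ Lᶜ, t i < b - a := fun i hi => hsmall i (mem_compl.1 hi)
  have ha : 0 ≤ a := by simpa using h.sum_le_of_lt (S := ∅) (by simpa using hb)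
  have hLc : ∑ i ∈ Lᶜ, t i ≤ a := by
    simpa using h.sum_union_le hsmall' (B := ∅) (by simpa)
  obtain ⟨j, hj, -⟩ : ∃ j ∈ L, t j ≠ 0 :=
    exists_ne_zero_of_sum_ne_zero (by linarith [sum_add_sum_compl L t])
  have : Nonempty ι := ⟨j⟩
  obtain ⟨k, hk⟩ : ∃ k, L.erase j ⊆ {k} :=
    card_le_one_iff_subset_singleton.1 (by rw [card_erase_of_mem hj]; omega)
  have hrest : ∑ i ∈ L.erase j, t i ≤ a := h.sum_le_of_lt <| by
    calc ∑ i ∈ L.erase j, t i ≤ ∑ i ∈ {k}, t i :=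
          sum_le_sum_of_subset_of_nonneg hk fun i _ _ => ht i
      _ < b := by simpa using hlt k
  have hcover : Lᶜ ∪ L.erase j = univ.erase j := by
    ext i
    rcases eq_or_ne i j with rfl | hij <;> simp [*, em']
  have := h.sum_union_le hsmall' hrest
  rw [hcover] at this
  linarith [sum_erase_add univ t (mem_univ j), hlt j]

theorem exists_typeIII_of_avoidsGap {σ : ℝ} (hσ : 1 / 10 < σ) (ht : ∀ i, 0 ≤ t i)
    (hsum : ∑ i, t i = 1) (hlt : ∀ i, t i < 1 / 2 + σ)
    (h : AvoidsGap t (1 / 2 - σ) (1 / 2 + σ)) :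
    ∃ i j k : ι, i ≠ j ∧ i ≠ k ∧ j ≠ k ∧
      2 * σ ≤ t i ∧ t i ≤ t j ∧ t j ≤ t k ∧ t k ≤ 1 / 2 - σ ∧
      1 / 2 + σ ≤ t i + t j ∧ 1 / 2 + σ ≤ t i + t k ∧ 1 / 2 + σ ≤ t j + t k := by
  classical
  set L := univ.filter fun i => 2 * σ ≤ t i
  have hle : ∀ i, t i ≤ 1 / 2 - σ := fun i => by
    simpa using h.sum_le_of_lt (S := {i}) (by simpa using hlt i)
  have hpair : ∀ i ∈ L, ∀ j ∈ L, i ≠ j → 1 / 2 + σ ≤ t i + t j := by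
    intro i hi j hj hij
    simp only [L, mem_filter, mem_univ, true_and] at hi hj
    have := h {i, j}
    rw [sum_pair hij] at this
    exact this.resolve_left (by linarith)
  have hL : #L = 3 := by
    refine le_antisymm (card_le_three_of_le_add ht hpair (by linarith)) ?_
    refine h.three_le_card ht (by linarith) (by linarith) hlt fun i hi => ?_
    simp only [L, mem_filter, mem_univ, true_and, not_le] at hi
    linarith
  obtain ⟨g, hgL, hg⟩ := exists_embedding_monotone_comp t hL
  have hbig : ∀ x, 2 * σ ≤ t (g x) := fun x => by simpa [L] using hgL x
  have hne : ∀ x y : Fin 3, x ≠ y → g x ≠ g y := fun x y hxy => g.injective.ne hxy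
  exact ⟨g 0, g 1, g 2, hne 0 1 (by decide), hne 0 2 (by decide), hne 1 2 (by decide),
    hbig 0, hg (by decide : (0 : Fin 3) ≤ 1), hg (by decide : (1 : Fin 3) ≤ 2), hle _,
    hpair _ (hgL 0) _ (hgL 1) (hne 0 1 (by decide)),
    hpair _ (hgL 0) _ (hgL 2) (hne 0 2 (by decide)),
    hpair _ (hgL 1) _ (hgL 2) (hne 1 2 (by decide))⟩

end Gap

theorem combinatorial_lemma_general (n : ℕ) (σ : ℝ)
    (hσ1 : 1 / 10 < σ)
    (t : Fin n → ℝ) (ht : ∀ i, 0 ≤ t i) (hsum : ∑ i, t i = 1) :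
    (∃ i, 1 / 2 + σ ≤ t i) ∨
    (∃ S : Finset (Fin n),
      1 / 2 - σ < ∑ i ∈ S, t i ∧ ∑ i ∈ S, t i ≤ ∑ i ∈ Sᶜ, t i ∧
      ∑ i ∈ Sᶜ, t i < 1 / 2 + σ) ∨
    (∃ i j k : Fin n, i ≠ j ∧ i ≠ k ∧ j ≠ k ∧
      2 * σ ≤ t i ∧ t i ≤ t j ∧ t j ≤ t k ∧ t k ≤ 1 / 2 - σ ∧
      1 / 2 + σ ≤ t i + t j ∧ 1 / 2 + σ ≤ t i + t k ∧ 1 / 2 + σ ≤ t j + t k) := by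
  refine or_iff_not_imp_left.2 fun hType0 => or_iff_not_imp_left.2 fun hTypeI => ?_
  push Not at hType0 hTypeI
  exact exists_typeIII_of_avoidsGap hσ1 ht hsum hType0
    (avoidsGap_of_forall_not_balanced (by rw [hsum]; ring) hTypeI)

/-- The combinatorial lemma (Lemma 3.1 of Polymath8a): for `1/10 < σ < 1/2` and
non-negative reals `t₁,…,tₙ` summing to `1`, one of the Type 0, Type I/II, or
Type III alternatives holds. -/
theorem combinatorial_lemma (n : ℕ) (hn : 0 < n) (σ : ℝ)
    (hσ1 : 1 / 10 < σ) (hσ2 : σ < 1 / 2)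
    (t : Fin n → ℝ) (ht : ∀ i, 0 ≤ t i) (hsum : ∑ i, t i = 1) :
    (∃ i, 1 / 2 + σ ≤ t i) ∨
    (∃ S : Finset (Fin n),
      1 / 2 - σ < ∑ i ∈ S, t i ∧ ∑ i ∈ S, t i ≤ ∑ i ∈ Sᶜ, t i ∧
      ∑ i ∈ Sᶜ, t i < 1 / 2 + σ) ∨
    (∃ i j k : Fin n, i ≠ j ∧ i ≠ k ∧ j ≠ k ∧
      2 * σ ≤ t i ∧ t i ≤ t j ∧ t j ≤ t k ∧ t k ≤ 1 / 2 - σ ∧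
      1 / 2 + σ ≤ t i + t j ∧ 1 / 2 + σ ≤ t i + t k ∧ 1 / 2 + σ ≤ t j + t k) :=
  combinatorial_lemma_general n σ hσ1 t ht hsum
end

section
/- Let 1/6 < σ < 1/2 and let t₁,…,tₙ be non-negative reals summing to 1. Then either some tᵢ ≥ 1/2 + σ, or there is a partition {1,…,n} = S ∪ T with 1/2 − σ < Σ_{i∈S} tᵢ ≤ Σ_{i∈T} tᵢ < 1/2 + σ. (That is, the Type III alternative of the combinatorial lemma cannot occur when σ > 1/6.) -/
/-!
If no single weight lies in the window `(1/2 - σ, 1/2 + σ)`, every weight is at most `1/2 - σ`,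
which is less than the window's width `2σ` because `σ > 1/6`. Adding the weights one at a time,
the running sum then cannot jump over the window, so some subset sum lands in it; that subset or
its complement is the lighter part of the partition.
-/

open Finset

theorem Finset.exists_subset_sum_mem_Ioo {ι α : Type*} [DecidableEq ι] [AddCommGroup α]
    [LinearOrder α] [IsOrderedAddMonoid α] {f : ι → α} {a d : α} (ha : 0 ≤ a) (s : Finset ι)
    (hf : ∀ i ∈ s, f i < d) (hs : a < ∑ i ∈ s, f i) :
    ∃ U ⊆ s, ∑ i ∈ U, f i ∈ Set.Ioo a (a + d) := by
  induction s using Finset.induction_on with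
  | empty => exact absurd hs (by simpa using ha)
  | insert i s hi ih =>
    rw [sum_insert hi] at hs
    by_cases hs' : a < ∑ j ∈ s, f j
    · obtain ⟨U, hUs, hU⟩ := ih (fun j hj => hf j (mem_insert_of_mem hj)) hs'
      exact ⟨U, hUs.trans (subset_insert i s), hU⟩
    · refine ⟨insert i s, Subset.rfl, ?_, ?_⟩
      · rwa [sum_insert hi]
      · rw [sum_insert hi, add_comm a]
        exact add_lt_add_of_lt_of_le (hf i (mem_insert_self i s)) (not_lt.mp hs')

theorem exists_balanced_partition_of_sum_mem_Ioo {ι : Type*} [Fintype ι] [DecidableEq ι]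
    {t : ι → ℝ} {σ : ℝ} (hsum : ∑ i, t i = 1) {U : Finset ι}
    (hU : ∑ i ∈ U, t i ∈ Set.Ioo (1 / 2 - σ) (1 / 2 + σ)) :
    ∃ S : Finset ι, 1 / 2 - σ < ∑ i ∈ S, t i ∧ ∑ i ∈ S, t i ≤ ∑ i ∈ Sᶜ, t i ∧
      ∑ i ∈ Sᶜ, t i < 1 / 2 + σ := by
  have hcompl (S : Finset ι) : ∑ i ∈ Sᶜ, t i = 1 - ∑ i ∈ S, t i := by
    rw [← hsum, ← sum_compl_add_sum S t, add_sub_cancel_right]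
  obtain ⟨hlo, hhi⟩ := hU
  rcases le_total (∑ i ∈ U, t i) (1 / 2) with hle | hge
  · exact ⟨U, hlo, by rw [hcompl]; linarith, by rw [hcompl]; linarith⟩
  · refine ⟨Uᶜ, ?_, ?_, ?_⟩ <;> simp only [compl_compl, hcompl] <;> linarith

theorem combinatorial_lemma_large_sigma_general (n : ℕ) (σ : ℝ)
    (hσ1 : 1 / 6 < σ) (hσ2 : σ < 1 / 2)
    (t : Fin n → ℝ) (hsum : ∑ i, t i = 1) :
    (∃ i, 1 / 2 + σ ≤ t i) ∨
    (∃ S : Finset (Fin n),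
      1 / 2 - σ < ∑ i ∈ S, t i ∧ ∑ i ∈ S, t i ≤ ∑ i ∈ Sᶜ, t i ∧
      ∑ i ∈ Sᶜ, t i < 1 / 2 + σ) := by
  by_cases hbig : ∃ i, 1 / 2 + σ ≤ t i
  · exact Or.inl hbig
  push Not at hbig
  right
  suffices ∃ U : Finset (Fin n), ∑ i ∈ U, t i ∈ Set.Ioo (1 / 2 - σ) (1 / 2 + σ) from
    this.elim fun U hU => exists_balanced_partition_of_sum_mem_Ioo hsum hU
  by_cases hmid : ∃ i, 1 / 2 - σ < t i
  · obtain ⟨i, hi⟩ := hmid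
    exact ⟨{i}, by simpa only [sum_singleton] using ⟨hi, hbig i⟩⟩
  push Not at hmid
  obtain ⟨U, -, hU⟩ := univ.exists_subset_sum_mem_Ioo (f := t) (a := 1 / 2 - σ) (d := 2 * σ)
    (by linarith) (fun i _ => (hmid i).trans_lt (by linarith)) (by rw [hsum]; linarith)
  rw [show 1 / 2 - σ + 2 * σ = 1 / 2 + σ by ring] at hU
  exact ⟨U, hU⟩

/-- For `1/6 < σ < 1/2` and non-negative reals summing to `1`, either some `tᵢ ≥ 1/2 + σ`
or there is a partition with both partial sums in `(1/2 − σ, 1/2 + σ)`: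
the Type III alternative cannot occur. -/
theorem combinatorial_lemma_large_sigma (n : ℕ) (hn : 0 < n) (σ : ℝ)
    (hσ1 : 1 / 6 < σ) (hσ2 : σ < 1 / 2)
    (t : Fin n → ℝ) (ht : ∀ i, 0 ≤ t i) (hsum : ∑ i, t i = 1) :
    (∃ i, 1 / 2 + σ ≤ t i) ∨
    (∃ S : Finset (Fin n),
      1 / 2 - σ < ∑ i ∈ S, t i ∧ ∑ i ∈ S, t i ≤ ∑ i ∈ Sᶜ, t i ∧
      ∑ i ∈ Sᶜ, t i < 1 / 2 + σ) :=
  combinatorial_lemma_large_sigma_general n σ hσ1 hσ2 t hsum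
end

section
/- (Heath-Brown identity) For any K ≥ 1, on the interval [x, 2x] one has the identity Λ = Σ_{j=1}^{K} (−1)^{j−1} C(K,j) μ_≤^{⋆j} ⋆ 1^{⋆(j−1)} ⋆ L, where μ_≤(n) = μ(n)·1_{n ≤ (2x)^{1/K}}, 1 is the constant function 1, L(n) = log n, and ⋆ denotes Dirichlet convolution with f^{⋆j} the j-fold Dirichlet convolution of f. -/
open ArithmeticFunction

/-- Dirichlet convolution of two arithmetic functions `ℕ → ℝ`. -/
noncomputable def dconv (f g : ℕ → ℝ) : ℕ → ℝ :=
  fun n => ∑ d ∈ n.divisors, f d * g (n / d)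

/-- `j`-fold Dirichlet convolution of `f` (with `f^{⋆0}` the Dirichlet unit `δ`). -/
noncomputable def diter (f : ℕ → ℝ) : ℕ → (ℕ → ℝ)
  | 0 => fun n => if n = 1 then 1 else 0
  | (j + 1) => dconv f (diter f j)

/-
Write `A = μ_≤ ⋆ 1` and `z = (2x)^{1/K}`. Since `A` agrees with `μ ⋆ 1 = δ` on `[0, z]`, the
function `1 - A` vanishes there, so `(1 - A)^{⋆K}` and `(1 - A)^{⋆K} ⋆ Λ` vanish on
`[0, z^K] = [0, 2x]`. There `Λ = (1 - (1 - A)^{⋆K}) ⋆ Λ`; expand binomially and use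
`Λ = L ⋆ μ` and `1 ⋆ μ = δ` to get `A^{⋆j} ⋆ Λ = μ_≤^{⋆j} ⋆ 1^{⋆(j-1)} ⋆ L`.
-/

open scoped ArithmeticFunction.zeta ArithmeticFunction.Moebius

theorem one_sub_one_sub_pow {R A : Type*} [CommRing R] [Ring A] [Algebra R A] (a : A) (K : ℕ) :
    1 - (1 - a) ^ K = ∑ j ∈ Finset.Icc 1 K, ((-1 : R) ^ (j - 1) * K.choose j) • a ^ j := by
  rw [sub_eq_neg_add 1 a, ((Commute.one_right _).neg_left).add_pow, Finset.sum_range_succ',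
    ← Finset.Ico_add_one_right_eq_Icc, Finset.sum_Ico_eq_sum_range, add_tsub_cancel_right]
  simp only [pow_zero, one_pow, Nat.choose_zero_right, Nat.cast_one, mul_one,
    sub_add_eq_sub_sub, sub_sub_cancel_left, ← Finset.sum_neg_distrib]
  refine Finset.sum_congr rfl fun j _ => ?_
  rw [add_comm 1 j, Nat.add_sub_cancel, mul_smul, Nat.cast_smul_eq_nsmul, nsmul_eq_mul, neg_pow,
    Algebra.smul_def, map_pow, map_neg, map_one, pow_succ, mul_neg_one, neg_mul, neg_mul, neg_neg,
    mul_assoc, Nat.cast_comm]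

namespace ArithmeticFunction

variable {R : Type*}

protected theorem sub_apply [AddGroup R] (f g : ArithmeticFunction R) (n : ℕ) :
    (f - g) n = f n - g n := by
  rw [sub_eq_add_neg, add_apply, neg_apply, ← sub_eq_add_neg]

protected theorem sum_apply [AddCommMonoid R] {ι : Type*} (s : Finset ι)
    (f : ι → ArithmeticFunction R) (n : ℕ) : (∑ i ∈ s, f i) n = ∑ i ∈ s, f i n := by
  induction s using Finset.cons_induction with
  | empty => rfl
  | cons i s hi ih => rw [Finset.sum_cons, Finset.sum_cons, add_apply, ih]

/-- `truncate z μ` is the paper's `μ_≤`, with `z = (2x)^{1/K}`. -/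
noncomputable def truncate [Zero R] (z : ℝ) (f : ArithmeticFunction R) : ArithmeticFunction R :=
  ⟨fun n => if (n : ℝ) ≤ z then f n else 0, by simp⟩

section Semiring

variable [Semiring R] {z : ℝ}

theorem mul_apply_eq_of_eqOn_le {f g : ArithmeticFunction R}
    (hfg : ∀ m : ℕ, (m : ℝ) ≤ z → f m = g m) (h : ArithmeticFunction R) {n : ℕ}
    (hn : (n : ℝ) ≤ z) : (f * h) n = (g * h) n := by
  rw [mul_apply, mul_apply]
  refine Finset.sum_congr rfl fun p hp => ?_
  obtain ⟨hpn, hn0⟩ := Nat.mem_divisorsAntidiagonal.mp hp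
  have hp1 : (p.1 : ℝ) ≤ n := by
    exact_mod_cast Nat.le_of_dvd (Nat.pos_of_ne_zero hn0) (Dvd.intro _ hpn)
  rw [hfg p.1 (hp1.trans hn)]

theorem mul_apply_eq_zero_of_le_left {f : ArithmeticFunction R}
    (hf : ∀ m : ℕ, (m : ℝ) ≤ z → f m = 0) (g : ArithmeticFunction R) {n : ℕ} (hn : (n : ℝ) ≤ z) :
    (f * g) n = 0 := by
  rw [mul_apply_eq_of_eqOn_le (g := 0) hf g hn, zero_mul, zero_apply]

theorem mul_apply_eq_zero_of_le {f g : ArithmeticFunction R} {y : ℝ} (hy : 0 ≤ y) (hz : 0 ≤ z)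
    (hf : ∀ m : ℕ, (m : ℝ) ≤ y → f m = 0) (hg : ∀ m : ℕ, (m : ℝ) ≤ z → g m = 0)
    {n : ℕ} (hn : (n : ℝ) ≤ y * z) : (f * g) n = 0 := by
  rw [mul_apply]
  refine Finset.sum_eq_zero fun p hp => ?_
  have hpn : (p.1 : ℝ) * p.2 = n := by exact_mod_cast (Nat.mem_divisorsAntidiagonal.mp hp).1
  rcases le_or_gt (p.1 : ℝ) y with h1 | h1
  · rw [hf _ h1, zero_mul]
  rcases le_or_gt (p.2 : ℝ) z with h2 | h2
  · rw [hg _ h2, mul_zero]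
  linarith [mul_lt_mul'' h1 h2 hy hz]

theorem pow_apply_eq_zero_of_le {f : ArithmeticFunction R} (hz : 0 ≤ z)
    (hf : ∀ m : ℕ, (m : ℝ) ≤ z → f m = 0) {K : ℕ} (hK : 1 ≤ K) {n : ℕ} (hn : (n : ℝ) ≤ z ^ K) :
    (f ^ K) n = 0 := by
  induction K, hK using Nat.le_induction generalizing n with
  | base =>
    rw [pow_one] at hn ⊢
    exact hf n hn
  | succ K hK ih =>
    rw [pow_succ'] at hn ⊢
    exact mul_apply_eq_zero_of_le hz (pow_nonneg hz K) hf (fun m hm => ih hm) hn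

end Semiring

theorem one_sub_truncate_moebius_mul_zeta_apply_eq_zero [Ring R] {z : ℝ} {m : ℕ}
    (hm : (m : ℝ) ≤ z) : (1 - truncate z (μ : ArithmeticFunction R) * ζ) m = 0 := by
  have htrunc : ∀ k : ℕ, (k : ℝ) ≤ z →
      truncate z (μ : ArithmeticFunction R) k = (μ : ArithmeticFunction R) k :=
    fun k hk => if_pos hk
  rw [ArithmeticFunction.sub_apply, mul_apply_eq_of_eqOn_le htrunc _ hm, coe_moebius_mul_coe_zeta,
    sub_self]

theorem mul_zeta_pow_mul_vonMangoldt (f : ArithmeticFunction ℝ) {j : ℕ} (hj : 1 ≤ j) :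
    (f * ζ) ^ j * Λ = f ^ j * (ζ ^ (j - 1) * log) := by
  obtain ⟨i, rfl⟩ := Nat.exists_eq_add_of_le' hj
  rw [← log_mul_moebius_eq_vonMangoldt, Nat.add_sub_cancel,
    show (f * ζ) ^ (i + 1) * (log * μ) = f ^ (i + 1) * (ζ ^ i * log) * (ζ * μ) by ring,
    coe_zeta_mul_coe_moebius, mul_one]

end ArithmeticFunction

theorem dconv_eq_coe_mul (f g : ArithmeticFunction ℝ) : dconv f g = ⇑(f * g) := by
  funext n
  rw [mul_apply, Nat.sum_divisorsAntidiagonal (fun a b => f a * g b)]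
  rfl

theorem diter_eq_coe_pow (f : ArithmeticFunction ℝ) (j : ℕ) : diter f j = ⇑(f ^ j) := by
  induction j with
  | zero => funext n; simp [diter, one_apply]
  | succ j ih => rw [diter, ih, dconv_eq_coe_mul, ← pow_succ']

theorem heath_brown_identity_general (x : ℝ) (K : ℕ) (hK : 1 ≤ K)
    (n : ℕ) (hn2 : (n : ℝ) ≤ 2 * x) :
    Λ n = ∑ j ∈ Finset.Icc 1 K, (-1 : ℝ) ^ (j - 1) * (K.choose j : ℝ) *
      dconv
        (diter (fun m => if (m : ℝ) ≤ (2 * x) ^ ((1 : ℝ) / (K : ℝ))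
          then ((moebius m : ℤ) : ℝ) else 0) j)
        (dconv (diter (fun m => if m = 0 then 0 else 1) (j - 1))
          (fun m => Real.log m)) n := by
  set z := (2 * x) ^ ((1 : ℝ) / (K : ℝ))
  have hx : 0 ≤ 2 * x := (Nat.cast_nonneg n).trans hn2
  have hz : 0 ≤ z := Real.rpow_nonneg hx _
  have hzK : z ^ K = 2 * x := by
    rw [← Real.rpow_natCast, ← Real.rpow_mul hx, one_div_mul_cancel (by positivity), Real.rpow_one]
  have hμ : (fun m : ℕ => if (m : ℝ) ≤ z then ((μ m : ℤ) : ℝ) else 0) =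
      ⇑(truncate z (μ : ArithmeticFunction ℝ)) := rfl
  have hζ : (fun m : ℕ => if m = 0 then (0 : ℝ) else 1) = ⇑(ζ : ArithmeticFunction ℝ) := by
    funext m
    rw [natCoe_apply, zeta_apply]
    split_ifs <;> simp
  have hlog : (fun m : ℕ => Real.log m) = ⇑log := rfl
  rw [hμ, hζ, hlog]
  simp only [diter_eq_coe_pow, dconv_eq_coe_mul]
  set A := truncate z (μ : ArithmeticFunction ℝ) * ζ
  have hvanish : ((1 - A) ^ K * Λ) n = 0 :=
    mul_apply_eq_zero_of_le_left (fun m hm => pow_apply_eq_zero_of_le hz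
      (fun k hk => one_sub_truncate_moebius_mul_zeta_apply_eq_zero hk) hK hm) Λ (hzK ▸ hn2)
  calc Λ n = ((1 - (1 - A) ^ K) * Λ) n := by
        rw [sub_mul, one_mul, ArithmeticFunction.sub_apply, hvanish, sub_zero]
    _ = _ := by
      rw [one_sub_one_sub_pow (R := ℝ), Finset.sum_mul, ArithmeticFunction.sum_apply]
      refine Finset.sum_congr rfl fun j hj => ?_
      rw [smul_mul_assoc, smul_map, smul_eq_mul,
        mul_zeta_pow_mul_vonMangoldt _ (Finset.mem_Icc.mp hj).1]

/-- The Heath-Brown identity: for any `K ≥ 1`, on the interval `[x, 2x]` one has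
`Λ = Σ_{j=1}^{K} (−1)^{j−1} C(K,j) μ_≤^{⋆j} ⋆ 1^{⋆(j−1)} ⋆ L`, with
`μ_≤(n) = μ(n)·1_{n ≤ (2x)^{1/K}}`, `L(n) = log n`. -/
theorem heath_brown_identity (x : ℝ) (hx : 1 ≤ x) (K : ℕ) (hK : 1 ≤ K)
    (n : ℕ) (hn1 : x ≤ (n : ℝ)) (hn2 : (n : ℝ) ≤ 2 * x) :
    Λ n = ∑ j ∈ Finset.Icc 1 K, (-1 : ℝ) ^ (j - 1) * (K.choose j : ℝ) *
      dconv
        (diter (fun m => if (m : ℝ) ≤ (2 * x) ^ ((1 : ℝ) / (K : ℝ))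
          then ((moebius m : ℤ) : ℝ) else 0) j)
        (dconv (diter (fun m => if m = 0 then 0 else 1) (j - 1))
          (fun m => Real.log m)) n :=
  heath_brown_identity_general x K hK n hn2
end
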